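/- Let g : ℝ → ℝ be differentiable and nonexpansive, and set μ := inf of g' over ℝ. Then the modulus of averagedness of g equals (1 - μ)/2; i.e., for κ ∈ (0,1], g is κ-averaged if and only if κ ≥ (1 - μ)/2. -/

import Mathlib

/-!
In a decomposition `g = (1 - κ) Id + κ N` the map `N` is forced to be `(g - (1 - κ) Id) / κ`, so
`g` is `κ`-averaged iff `g - (1 - κ) Id` is `κ`-Lipschitz. By the mean value inequality and its
converse this means `|g' - (1 - κ)| ≤ κ`, i.e. `1 - 2κ ≤ g' ≤ 1`. The upper bound always holds,
and the lower one says exactly `1 - 2κ ≤ inf g'`.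
-/

open Set

def Nonexpansive (T : ℝ → ℝ) : Prop := ∀ x y, ‖T x - T y‖ ≤ ‖x - y‖

def IsAveraged (T : ℝ → ℝ) (κ : ℝ) : Prop :=
  ∃ N : ℝ → ℝ, Nonexpansive N ∧ ∀ x, T x = (1 - κ) • x + κ • N x

open NNReal

theorem nonexpansive_iff_lipschitzWith_one {T : ℝ → ℝ} : Nonexpansive T ↔ LipschitzWith 1 T := by
  simp only [Nonexpansive, lipschitzWith_iff_dist_le_mul, NNReal.coe_one, one_mul, dist_eq_norm]

theorem lipschitzWith_one_div_iff {f : ℝ → ℝ} {κ : ℝ} (hκ : 0 < κ) :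
    LipschitzWith 1 (fun x ↦ f x / κ) ↔ LipschitzWith κ.toNNReal f := by
  simp only [lipschitzWith_iff_dist_le_mul, Real.dist_eq, NNReal.coe_one, one_mul,
    Real.coe_toNNReal _ hκ.le, div_sub_div_same, abs_div, abs_of_pos hκ, div_le_iff₀' hκ]

theorem isAveraged_iff_lipschitzWith {T : ℝ → ℝ} {κ : ℝ} (hκ : 0 < κ) :
    IsAveraged T κ ↔ LipschitzWith κ.toNNReal (fun x ↦ T x - (1 - κ) * x) := by
  have hN (N : ℝ → ℝ) : (∀ x, T x = (1 - κ) • x + κ • N x) ↔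
      N = fun x ↦ (T x - (1 - κ) * x) / κ := by
    simp only [funext_iff, smul_eq_mul, eq_div_iff hκ.ne']
    exact forall_congr' fun x ↦ by constructor <;> intro h <;> linarith
  simp only [IsAveraged, hN, exists_eq_right, nonexpansive_iff_lipschitzWith_one,
    lipschitzWith_one_div_iff hκ]

theorem lipschitzWith_iff_nnnorm_deriv_le {𝕜 F : Type*} [RCLike 𝕜] [NormedAddCommGroup F]
    [NormedSpace 𝕜 F] {f : 𝕜 → F} (hf : Differentiable 𝕜 f) {C : ℝ≥0} :
    LipschitzWith C f ↔ ∀ x, ‖deriv f x‖₊ ≤ C :=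
  ⟨fun hlip _ ↦ NNReal.coe_le_coe.1 (norm_deriv_le_of_lipschitz hlip),
    lipschitzWith_of_nnnorm_deriv_le hf⟩

theorem lipschitzWith_sub_mul_iff {g : ℝ → ℝ} (hg : Differentiable ℝ g) {κ : ℝ} (hκ : 0 ≤ κ) :
    LipschitzWith κ.toNNReal (fun x ↦ g x - (1 - κ) * x) ↔
      ∀ x, 1 - 2 * κ ≤ deriv g x ∧ deriv g x ≤ 1 := by
  have hderiv (x : ℝ) : deriv (fun x ↦ g x - (1 - κ) * x) x = deriv g x - (1 - κ) := by
    have : HasDerivAt (fun x ↦ g x - (1 - κ) * x) (deriv g x - (1 - κ) * 1) x :=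
      (hg x).hasDerivAt.sub ((hasDerivAt_id x).const_mul (1 - κ))
    rw [this.deriv, mul_one]
  rw [lipschitzWith_iff_nnnorm_deriv_le (by fun_prop)]
  refine forall_congr' fun x ↦ ?_
  rw [← NNReal.coe_le_coe, coe_nnnorm, Real.norm_eq_abs, hderiv, Real.coe_toNNReal _ hκ, abs_le]
  constructor <;> rintro ⟨h₁, h₂⟩ <;> constructor <;> linarith

theorem modulus_of_real_function (g : ℝ → ℝ) (hg : Differentiable ℝ g)
    (hg' : ∀ x : ℝ, |deriv g x| ≤ 1) (μ : ℝ) (hμ : μ = ⨅ x : ℝ, deriv g x)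
    (κ : ℝ) (hκ : κ ∈ Ioc (0 : ℝ) 1) :
    IsAveraged g κ ↔ (1 - μ) / 2 ≤ κ := by
  have hbdd : BddBelow (range (deriv g)) := ⟨-1, by rintro _ ⟨x, rfl⟩; exact (abs_le.1 (hg' x)).1⟩
  calc IsAveraged g κ ↔ ∀ x, 1 - 2 * κ ≤ deriv g x ∧ deriv g x ≤ 1 := by
        rw [isAveraged_iff_lipschitzWith hκ.1, lipschitzWith_sub_mul_iff hg hκ.1.le]
    _ ↔ ∀ x, 1 - 2 * κ ≤ deriv g x :=
        forall_congr' fun x ↦ and_iff_left (abs_le.1 (hg' x)).2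
    _ ↔ 1 - 2 * κ ≤ μ := by rw [hμ, le_ciInf_iff hbdd]
    _ ↔ (1 - μ) / 2 ≤ κ := by constructor <;> intro <;> linarith
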